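/- Let V be a finite-dimensional complex inner product space, H : V → V a self-adjoint linear operator, λ ∈ ℝ, t ∈ ℝ, and let ψ_ref, ψ ∈ V be unit vectors with Hψ_ref = λψ_ref and ⟨ψ_ref, ψ⟩ = 0. Set U = exp(−itH), ψ_± = (ψ_ref ± ψ)/√2, ψ_{±i} = (ψ_ref ± iψ)/√2, w_± = |⟨ψ_±, Uψ_+⟩|², w_{±i} = |⟨ψ_{±i}, Uψ_+⟩|², and a = ⟨ψ, Uψ⟩. Then w_+ − w_− = Re(e^{iλt}·a) and w_{+i} − w_{−i} = Im(e^{iλt}·a). -/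

import Mathlib

/-!
Since `ψref` is an eigenvector of `H`, it is an eigenvector of `U = exp(-itH)` with eigenvalue
`c = e^{-iλt}` and of `U* = exp(itH)`, so `ψref ⊥ ψ` gives `ψref ⊥ Uψ`. Expanding then yields
`⟪(ψref + sψ)/√2, Uψ₊⟫ = (c + s̄a)/2`, and the two differences of squared moduli are the
polarization identity `|c + w|² - |c - w|² = 4 Re(c̄w)` for `w = a` and `w = -ia`.
-/

open NormedSpace ContinuousLinearMap
open scoped InnerProductSpace ComplexInnerProductSpace ComplexConjugate

section

variable {𝕜 E : Type*} [RCLike 𝕜]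

theorem pow_apply_of_apply_eq_smul [AddCommGroup E] [Module 𝕜 E] {A : Module.End 𝕜 E} {μ : 𝕜}
    {x : E} (h : A x = μ • x) (n : ℕ) : (A ^ n) x = μ ^ n • x := by
  induction n with
  | zero => simp
  | succ n ih => rw [pow_succ, Module.End.mul_apply, h, map_smul, ih, smul_smul, pow_succ']

variable [NormedAddCommGroup E]

theorem exp_apply_of_apply_eq_smul [NormedSpace 𝕜 E] [CompleteSpace E] {A : E →L[𝕜] E} {μ : 𝕜}
    {x : E} (h : A x = μ • x) : exp A x = exp μ • x := by
  have hpow (n : ℕ) : (A ^ n) x = μ ^ n • x := by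
    simpa [Module.End.pow_apply] using pow_apply_of_apply_eq_smul (A := (A : Module.End 𝕜 E)) h n
  refine ((exp_series_hasSum_exp' (𝕂 := 𝕜) A).mapL (apply 𝕜 E x)).unique ?_
  simpa [hpow, smul_smul] using (exp_series_hasSum_exp' (𝕂 := 𝕜) μ).smul_const x

variable [InnerProductSpace 𝕜 E] [CompleteSpace E]

theorem IsSelfAdjoint.adjoint_exp_smul {H : E →L[𝕜] E} (hH : IsSelfAdjoint H) (z : 𝕜) :
    adjoint (NormedSpace.exp (z • H)) = NormedSpace.exp (star z • H) := by
  rw [← star_eq_adjoint, star_exp, star_smul, hH.star_eq]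

theorem IsSelfAdjoint.inner_exp_smul_apply_eq_zero {H : E →L[𝕜] E} (hH : IsSelfAdjoint H)
    {μ : 𝕜} {x y : E} (hx : H x = μ • x) (hxy : ⟪x, y⟫_𝕜 = 0) (z : 𝕜) :
    ⟪x, NormedSpace.exp (z • H) y⟫_𝕜 = 0 := by
  have hx' : (star z • H) x = (star z * μ) • x := by rw [smul_apply, hx, smul_smul]
  rw [← adjoint_inner_left, hH.adjoint_exp_smul, exp_apply_of_apply_eq_smul hx', inner_smul_left,
    hxy, mul_zero]

end

namespace Complex

theorem sq_norm_half_add_sub_sq_norm_half_sub (c w : ℂ) :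
    ‖2⁻¹ * (c + w)‖ ^ 2 - ‖2⁻¹ * (c - w)‖ ^ 2 = (conj c * w).re := by
  simp only [Complex.sq_norm, normSq_mul, normSq_add, normSq_sub, mul_re,
    conj_re, conj_im]
  norm_num
  ring

theorem sq_norm_half_sub_I_mul_sub_sq_norm_half_add_I_mul (c w : ℂ) :
    ‖2⁻¹ * (c - I * w)‖ ^ 2 - ‖2⁻¹ * (c + I * w)‖ ^ 2 = (conj c * w).im := by
  simp only [Complex.sq_norm, normSq_mul, normSq_add, normSq_sub, mul_re,
    mul_im, conj_re, conj_im, I_re, I_im]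
  norm_num
  ring

end Complex

theorem inner_sqrt_two_inv_smul_add_apply {V : Type*} [NormedAddCommGroup V]
    [InnerProductSpace ℂ V] {U : V →L[ℂ] V} {x y : V} {c : ℂ} (hx : ‖x‖ = 1) (hxy : ⟪x, y⟫ = 0)
    (hUx : U x = c • x) (hxUy : ⟪x, U y⟫ = 0) (s : ℂ) :
    ⟪(√2 : ℂ)⁻¹ • (x + s • y), U ((√2 : ℂ)⁻¹ • (x + y))⟫ = 2⁻¹ * (c + conj s * ⟪y, U y⟫) := by
  have hxx : ⟪x, x⟫ = 1 := by rw [inner_self_eq_norm_sq_to_K, hx]; norm_num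
  have hyx : ⟪y, x⟫ = 0 := inner_eq_zero_symm.mp hxy
  have hsqrt : conj (√2 : ℂ)⁻¹ * (√2 : ℂ)⁻¹ = 2⁻¹ := by
    rw [Complex.conj_inv, Complex.conj_ofReal, ← mul_inv, ← Complex.ofReal_mul,
      Real.mul_self_sqrt zero_le_two, Complex.ofReal_ofNat]
  rw [map_smul, inner_smul_left, inner_smul_right, ← mul_assoc, hsqrt, map_add, hUx]
  simp only [inner_add_left, inner_add_right, inner_smul_left, inner_smul_right, hxx, hyx, hxUy]
  ring

theorem measured_probabilities_re_im_general
    {V : Type*} [NormedAddCommGroup V] [InnerProductSpace ℂ V] [FiniteDimensional ℂ V]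
    (H : V →L[ℂ] V) (hH : IsSelfAdjoint H) (lam t : ℝ)
    (ψref ψ : V) (hψref : ‖ψref‖ = 1)
    (heig : H ψref = (lam : ℂ) • ψref) (horth : ⟪ψref, ψ⟫ = 0)
    (U : V →L[ℂ] V) (hU : U = NormedSpace.exp ((-(t : ℂ) * Complex.I) • H))
    (ψp ψm ψpi ψmi : V)
    (hψp : ψp = ((Real.sqrt 2 : ℂ))⁻¹ • (ψref + ψ))
    (hψm : ψm = ((Real.sqrt 2 : ℂ))⁻¹ • (ψref - ψ))
    (hψpi : ψpi = ((Real.sqrt 2 : ℂ))⁻¹ • (ψref + Complex.I • ψ))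
    (hψmi : ψmi = ((Real.sqrt 2 : ℂ))⁻¹ • (ψref - Complex.I • ψ))
    (wp wm wpi wmi : ℝ)
    (hwp : wp = ‖⟪ψp, U ψp⟫‖ ^ 2) (hwm : wm = ‖⟪ψm, U ψp⟫‖ ^ 2)
    (hwpi : wpi = ‖⟪ψpi, U ψp⟫‖ ^ 2) (hwmi : wmi = ‖⟪ψmi, U ψp⟫‖ ^ 2)
    (a : ℂ) (ha : a = ⟪ψ, U ψ⟫) :
    wp - wm = (Complex.exp (Complex.I * (lam : ℂ) * (t : ℂ)) * a).re ∧
    wpi - wmi = (Complex.exp (Complex.I * (lam : ℂ) * (t : ℂ)) * a).im := by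
  set c := Complex.exp (-(t : ℂ) * Complex.I * lam)
  have hUψref : U ψref = c • ψref := by
    rw [hU, exp_apply_of_apply_eq_smul (by rw [smul_apply, heig, smul_smul]),
      ← Complex.exp_eq_exp_ℂ]
  have hψrefUψ : ⟪ψref, U ψ⟫ = 0 := hU ▸ hH.inner_exp_smul_apply_eq_zero heig horth _
  have hinner := inner_sqrt_two_inv_smul_add_apply hψref horth hUψref hψrefUψ
  rw [← hψp, ← ha] at hinner
  have hp : ⟪ψp, U ψp⟫ = 2⁻¹ * (c + a) := by
    nth_rw 1 [hψp]; rw [← one_smul ℂ ψ, hinner, map_one, one_mul]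
  have hm : ⟪ψm, U ψp⟫ = 2⁻¹ * (c - a) := by
    rw [hψm, sub_eq_add_neg, ← neg_one_smul ℂ ψ, hinner, map_neg, map_one, neg_one_mul,
      ← sub_eq_add_neg]
  have hpi : ⟪ψpi, U ψp⟫ = 2⁻¹ * (c - Complex.I * a) := by
    rw [hψpi, hinner, Complex.conj_I, neg_mul, ← sub_eq_add_neg]
  have hmi : ⟪ψmi, U ψp⟫ = 2⁻¹ * (c + Complex.I * a) := by
    rw [hψmi, sub_eq_add_neg, ← neg_smul, hinner, map_neg, Complex.conj_I, neg_neg]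
  have hc : Complex.exp (Complex.I * lam * t) = conj c := by
    rw [← Complex.exp_conj]; congr 1; simp; ring
  constructor
  · rw [hwp, hwm, hp, hm, hc, Complex.sq_norm_half_add_sub_sq_norm_half_sub]
  · rw [hwpi, hwmi, hpi, hmi, hc, Complex.sq_norm_half_sub_I_mul_sub_sq_norm_half_add_I_mul]

/-- In the setting of the feature-extraction identity, with
`a = ⟪ψ, Uψ⟫`, the measured probabilities satisfy `w_+ - w_- = Re(e^{iλt}·a)` and
`w_{+i} - w_{-i} = Im(e^{iλt}·a)`. -/
theorem measured_probabilities_re_im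
    {V : Type*} [NormedAddCommGroup V] [InnerProductSpace ℂ V] [FiniteDimensional ℂ V]
    (H : V →L[ℂ] V) (hH : IsSelfAdjoint H) (lam t : ℝ)
    (ψref ψ : V) (hψref : ‖ψref‖ = 1) (hψ : ‖ψ‖ = 1)
    (heig : H ψref = (lam : ℂ) • ψref) (horth : ⟪ψref, ψ⟫ = 0)
    (U : V →L[ℂ] V) (hU : U = NormedSpace.exp ((-(t : ℂ) * Complex.I) • H))
    (ψp ψm ψpi ψmi : V)
    (hψp : ψp = ((Real.sqrt 2 : ℂ))⁻¹ • (ψref + ψ))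
    (hψm : ψm = ((Real.sqrt 2 : ℂ))⁻¹ • (ψref - ψ))
    (hψpi : ψpi = ((Real.sqrt 2 : ℂ))⁻¹ • (ψref + Complex.I • ψ))
    (hψmi : ψmi = ((Real.sqrt 2 : ℂ))⁻¹ • (ψref - Complex.I • ψ))
    (wp wm wpi wmi : ℝ)
    (hwp : wp = ‖⟪ψp, U ψp⟫‖ ^ 2) (hwm : wm = ‖⟪ψm, U ψp⟫‖ ^ 2)
    (hwpi : wpi = ‖⟪ψpi, U ψp⟫‖ ^ 2) (hwmi : wmi = ‖⟪ψmi, U ψp⟫‖ ^ 2)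
    (a : ℂ) (ha : a = ⟪ψ, U ψ⟫) :
    wp - wm = (Complex.exp (Complex.I * (lam : ℂ) * (t : ℂ)) * a).re ∧
    wpi - wmi = (Complex.exp (Complex.I * (lam : ℂ) * (t : ℂ)) * a).im :=
  measured_probabilities_re_im_general H hH lam t ψref ψ hψref heig horth U hU ψp ψm ψpi ψmi hψp hψm
    hψpi hψmi wp wm wpi wmi hwp hwm hwpi hwmi a ha
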